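/- arXiv:2309.09343 — 6 statements merged into one kernel-verified Lean document; each statement's English description precedes it below -/
import Mathlib

section
/- Let G : ℝ → ℝ be C¹ and coercive, V : ℝ → ℝ Lipschitz and 1-periodic. Suppose f₁, f₂ ∈ C¹(ℝ) are 1-periodic, with constants H₁, H₂ such that fᵢ'(x) + G(fᵢ(x)) + V(x) = Hᵢ for all x ∈ ℝ (i = 1,2), and ∫₀¹ f₁ = θ₁ < θ₂ = ∫₀¹ f₂. Then f₁(x) < f₂(x) for all x ∈ ℝ. -/
/-!
Put `w = f₂ - f₁`. Since `∫₀¹ w = θ₂ - θ₁ > 0`, `w` is positive somewhere. Subtracting the two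
equations, `w' = (H₂ - H₁) - (G ∘ f₂ - G ∘ f₁)`, and `G` is Lipschitz on the compact set of values
of `f₁, f₂`, so `|G ∘ f₂ - G ∘ f₁| ≤ L |w|`. If `H₁ ≤ H₂` this gives `w' ≥ -L w` wherever `w > 0`,
so `e^{Lt} w(t)` cannot decrease and `w` stays positive forever after; if `H₂ ≤ H₁` the same holds
backward in time. By periodicity every value of `w` is taken both after and before any given
point, so `w > 0` everywhere.
-/

open Set Real Function

theorem pos_of_le_of_hasDerivAt_ge_neg_mul {w w' : ℝ → ℝ} {L y x : ℝ}
    (hw : ∀ t, HasDerivAt w (w' t) t) (hbound : ∀ t, 0 < w t → -(L * w t) ≤ w' t)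
    (hy : 0 < w y) (hyx : y ≤ x) : 0 < w x := by
  by_contra! hx
  have hcont : Continuous w := continuous_iff_continuousAt.2 fun t => (hw t).continuousAt
  -- the first point `z` after `y` where `w ≤ 0`
  set S := Icc y x ∩ {t | w t ≤ 0}
  have hSbdd : BddBelow S := ⟨y, fun t ht => ht.1.1⟩
  obtain ⟨⟨hyz, hzx⟩, hwz⟩ : sInf S ∈ S :=
    (isClosed_Icc.inter (isClosed_le hcont continuous_const)).csInf_mem
      ⟨x, ⟨hyx, le_rfl⟩, hx⟩ hSbdd
  set z := sInf S
  have hpos : ∀ t ∈ Ioo y z, 0 < w t := fun t ht => by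
    by_contra! h
    exact (csInf_le hSbdd ⟨⟨ht.1.le, ht.2.le.trans hzx⟩, h⟩).not_gt ht.2
  have hmono : MonotoneOn (fun t => exp (L * t) * w t) (Icc y z) := by
    refine monotoneOn_of_hasDerivWithinAt_nonneg (f' := fun t => exp (L * t) * (L * w t + w' t))
      (convex_Icc y z) (by fun_prop) (fun t _ => ?_) (fun t ht => ?_)
    · exact ((((hasDerivAt_id t).const_mul L).exp.mul (hw t)).congr_deriv
        (by simp only [id, mul_one]; ring)).hasDerivWithinAt
    · rw [interior_Icc] at ht
      exact mul_nonneg (exp_pos _).le (by linarith [hbound t (hpos t ht)])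
  have hwz : w z ≤ 0 := hwz
  have : exp (L * y) * w y ≤ exp (L * z) * w z :=
    hmono (left_mem_Icc.2 hyz) (right_mem_Icc.2 hyz) hyz
  nlinarith [exp_pos (L * z), mul_pos (exp_pos (L * y)) hy]

theorem pos_of_ge_of_hasDerivAt_le_mul {w w' : ℝ → ℝ} {L y x : ℝ}
    (hw : ∀ t, HasDerivAt w (w' t) t) (hbound : ∀ t, 0 < w t → w' t ≤ L * w t)
    (hy : 0 < w y) (hxy : x ≤ y) : 0 < w x := by
  have hw_neg : ∀ t, HasDerivAt (fun s => w (-s)) (-w' (-t)) t := fun t =>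
    ((hw (-t)).comp t (hasDerivAt_neg t)).congr_deriv (mul_neg_one _)
  simpa using pos_of_le_of_hasDerivAt_ge_neg_mul (L := L) hw_neg
    (fun t ht => by linarith [hbound (-t) ht]) (by simpa using hy) (neg_le_neg hxy)

theorem exists_pos_of_intervalIntegral_pos {f : ℝ → ℝ} {a b : ℝ} (hab : a ≤ b)
    (hf : 0 < ∫ x in a..b, f x) : ∃ x, 0 < f x := by
  by_contra! h
  have : 0 ≤ ∫ x in a..b, -f x :=
    intervalIntegral.integral_nonneg hab fun u _ => neg_nonneg.2 (h u)
  rw [intervalIntegral.integral_neg] at this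
  linarith

theorem LocallyLipschitz.exists_abs_comp_sub_le_of_periodic {G f g : ℝ → ℝ} {c : ℝ}
    (hG : LocallyLipschitz G) (hc : c ≠ 0) (hf : Continuous f) (hg : Continuous g)
    (hfper : Periodic f c) (hgper : Periodic g c) :
    ∃ K : ℝ, ∀ x, |G (g x) - G (f x)| ≤ K * |g x - f x| := by
  obtain ⟨K, hK⟩ := hG.locallyLipschitzOn.exists_lipschitzOnWith_of_compact
    ((hfper.compact_of_continuous hc hf).union (hgper.compact_of_continuous hc hg))
  exact ⟨K, fun x => by
    simpa only [Real.dist_eq] using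
      hK.dist_le_mul _ (Or.inr (mem_range_self x)) _ (Or.inl (mem_range_self x))⟩

theorem stmt0_general
    (G V f₁ f₂ : ℝ → ℝ) (H₁ H₂ θ₁ θ₂ : ℝ)
    (hG : ContDiff ℝ 1 G)
    (hf₁ : ContDiff ℝ 1 f₁) (hf₂ : ContDiff ℝ 1 f₂)
    (hf₁per : Function.Periodic f₁ 1) (hf₂per : Function.Periodic f₂ 1)
    (hode₁ : ∀ x, deriv f₁ x + G (f₁ x) + V x = H₁)
    (hode₂ : ∀ x, deriv f₂ x + G (f₂ x) + V x = H₂)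
    (hθ₁ : (∫ x in (0:ℝ)..1, f₁ x) = θ₁)
    (hθ₂ : (∫ x in (0:ℝ)..1, f₂ x) = θ₂)
    (hθ : θ₁ < θ₂) :
    ∀ x, f₁ x < f₂ x := by
  intro x
  set w := fun t => f₂ t - f₁ t
  have hw : ∀ t, HasDerivAt w ((H₂ - H₁) - (G (f₂ t) - G (f₁ t))) t := fun t =>
    ((hf₂.differentiable one_ne_zero t).hasDerivAt.sub
      (hf₁.differentiable one_ne_zero t).hasDerivAt).congr_deriv (by linarith [hode₁ t, hode₂ t])
  obtain ⟨K, hK⟩ := hG.locallyLipschitz.exists_abs_comp_sub_le_of_periodic one_ne_zero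
    hf₁.continuous hf₂.continuous hf₁per hf₂per
  have hGw : ∀ t, 0 < w t → |G (f₂ t) - G (f₁ t)| ≤ K * w t := fun t ht => by
    have := hK t
    rwa [show |f₂ t - f₁ t| = w t from abs_of_pos ht] at this
  obtain ⟨y, hy⟩ : ∃ y, 0 < w y := exists_pos_of_intervalIntegral_pos zero_le_one (by
    rw [intervalIntegral.integral_sub (hf₂.continuous.intervalIntegrable 0 1)
      (hf₁.continuous.intervalIntegrable 0 1), hθ₁, hθ₂]
    linarith)
  have hwper : Periodic w 1 := hf₂per.sub hf₁per
  suffices 0 < w x by simpa [w] using this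
  rcases le_total H₁ H₂ with hH | hH
  · obtain ⟨x', hx', hwx⟩ := hwper.exists_mem_Ico one_pos x y
    rw [hwx]
    exact pos_of_le_of_hasDerivAt_ge_neg_mul (L := K) hw
      (fun t ht => by linarith [(abs_le.1 (hGw t ht)).2]) hy hx'.1
  · obtain ⟨x', hx', hwx⟩ := hwper.exists_mem_Ico one_pos x (y - 1)
    rw [hwx]
    exact pos_of_ge_of_hasDerivAt_le_mul (L := K) hw
      (fun t ht => by linarith [(abs_le.1 (hGw t ht)).1]) hy (by linarith [hx'.2])

theorem stmt0
    (G V f₁ f₂ : ℝ → ℝ) (H₁ H₂ θ₁ θ₂ : ℝ)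
    (hG : ContDiff ℝ 1 G)
    (hGcoercive : Filter.Tendsto G (Filter.cocompact ℝ) Filter.atTop)
    (hVlip : ∃ K, LipschitzWith K V)
    (hVper : Function.Periodic V 1)
    (hf₁ : ContDiff ℝ 1 f₁) (hf₂ : ContDiff ℝ 1 f₂)
    (hf₁per : Function.Periodic f₁ 1) (hf₂per : Function.Periodic f₂ 1)
    (hode₁ : ∀ x, deriv f₁ x + G (f₁ x) + V x = H₁)
    (hode₂ : ∀ x, deriv f₂ x + G (f₂ x) + V x = H₂)
    (hθ₁ : (∫ x in (0:ℝ)..1, f₁ x) = θ₁)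
    (hθ₂ : (∫ x in (0:ℝ)..1, f₂ x) = θ₂)
    (hθ : θ₁ < θ₂) :
    ∀ x, f₁ x < f₂ x :=
  stmt0_general G V f₁ f₂ H₁ H₂ θ₁ θ₂ hG hf₁ hf₂ hf₁per hf₂per hode₁ hode₂ hθ₁ hθ₂ hθ
end

section
/- Let G : ℝ → ℝ be C¹ and V : ℝ → ℝ 1-periodic. Suppose f₁, f₂ ∈ C¹(ℝ) are 1-periodic with ∫₀¹ f₁ = θ₁ < θ₂ = ∫₀¹ f₂, f₁ < f₂ pointwise, and each satisfies fᵢ' + G(fᵢ) + V = Hᵢ for constants H₁, H₂. Set g = f₂ − f₁ and K = max{|G'(p)| : min_{[0,1]} f₁ ≤ p ≤ max_{[0,1]} f₂}. Then (θ₂ − θ₁) e^{−K} ≤ g(x) ≤ (θ₂ − θ₁) e^{K} for all x ∈ ℝ. -/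
/-!
The difference `g = f₂ - f₁` is positive, 1-periodic, and solves `g' = (H₂ - H₁) - (G(f₂) - G(f₁))`,
where `|G(f₂) - G(f₁)| ≤ K g` by the mean value theorem. Depending on the sign of `H₂ - H₁`,
either `g' ≥ -K g` or `g' ≤ K g`; in both cases Grönwall's inequality over one period, combined with
periodicity, gives `g a ≤ g b * exp K` for all `a, b`. Integrating in `a` or in `b` over `[0, 1]`
compares `g` with its average `θ₂ - θ₁`.
-/

open Real Set Function

theorem hasDerivAt_mul_exp_mul {g : ℝ → ℝ} {y : ℝ} (hg : DifferentiableAt ℝ g y) (K : ℝ) :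
    HasDerivAt (fun y => g y * exp (K * y)) ((deriv g y + K * g y) * exp (K * y)) y :=
  (hg.hasDerivAt.fun_mul ((hasDerivAt_id' y).const_mul K).exp).congr_deriv (by ring)

theorem le_mul_exp_of_neg_mul_le_deriv {g : ℝ → ℝ} {K : ℝ} (hg : Differentiable ℝ g)
    (h : ∀ y, -K * g y ≤ deriv g y) {x y : ℝ} (hxy : x ≤ y) :
    g x ≤ g y * exp (K * (y - x)) := by
  have hmono : Monotone fun y => g y * exp (K * y) := by
    refine monotone_of_deriv_nonneg
      (fun y => (hasDerivAt_mul_exp_mul (hg y) K).differentiableAt) fun y => ?_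
    rw [(hasDerivAt_mul_exp_mul (hg y) K).deriv]
    exact mul_nonneg (by linarith [h y]) (exp_pos _).le
  calc g x = g x * exp (K * x) * exp (-(K * x)) := by rw [mul_assoc, ← exp_add]; simp
    _ ≤ g y * exp (K * y) * exp (-(K * x)) :=
      mul_le_mul_of_nonneg_right (hmono hxy) (exp_pos _).le
    _ = g y * exp (K * (y - x)) := by rw [mul_assoc, ← exp_add]; ring_nf

theorem le_mul_exp_of_deriv_le_mul {g : ℝ → ℝ} {K : ℝ} (hg : Differentiable ℝ g)
    (h : ∀ y, deriv g y ≤ K * g y) {x y : ℝ} (hxy : x ≤ y) :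
    g y ≤ g x * exp (K * (y - x)) := by
  have hanti : Antitone fun y => g y * exp (-K * y) := by
    refine antitone_of_deriv_nonpos
      (fun y => (hasDerivAt_mul_exp_mul (hg y) (-K)).differentiableAt) fun y => ?_
    rw [(hasDerivAt_mul_exp_mul (hg y) (-K)).deriv]
    exact mul_nonpos_of_nonpos_of_nonneg (by linarith [h y]) (exp_pos _).le
  calc g y = g y * exp (-K * y) * exp (K * y) := by rw [mul_assoc, ← exp_add]; simp
    _ ≤ g x * exp (-K * x) * exp (K * y) :=
      mul_le_mul_of_nonneg_right (hanti hxy) (exp_pos _).le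
    _ = g x * exp (K * (y - x)) := by rw [mul_assoc, ← exp_add]; ring_nf

theorem Function.Periodic.le_mul_exp_of_abs_deriv_sub_le {g : ℝ → ℝ} {K c : ℝ}
    (hper : Periodic g 1) (hg : Differentiable ℝ g) (hg₀ : ∀ y, 0 ≤ g y) (hK : 0 ≤ K)
    (h : ∀ y, |deriv g y - c| ≤ K * g y) (a b : ℝ) : g a ≤ g b * exp K := by
  have hexp : ∀ {s t : ℝ}, t ≤ s + 1 → g b * exp (K * (t - s)) ≤ g b * exp K :=
    fun hts => mul_le_mul_of_nonneg_left
      (exp_le_exp.mpr (mul_le_of_le_one_right hK (by linarith))) (hg₀ b)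
  rcases le_or_gt 0 c with hc | hc
  · obtain ⟨b', hb', hbb'⟩ := hper.exists_mem_Ico one_pos b a
    have hderiv : ∀ y, -K * g y ≤ deriv g y := fun y => by linarith [(abs_le.mp (h y)).1]
    calc g a ≤ g b' * exp (K * (b' - a)) := le_mul_exp_of_neg_mul_le_deriv hg hderiv hb'.1
      _ ≤ g b * exp K := hbb' ▸ hexp hb'.2.le
  · obtain ⟨a', ha', haa'⟩ := hper.exists_mem_Ico one_pos a b
    have hderiv : ∀ y, deriv g y ≤ K * g y := fun y => by linarith [(abs_le.mp (h y)).2]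
    calc g a = g a' := haa'
      _ ≤ g b * exp (K * (a' - b)) := le_mul_exp_of_deriv_le_mul hg hderiv ha'.1
      _ ≤ g b * exp K := hexp ha'.2.le

theorem integral_le_mul_and_le_integral_mul {g : ℝ → ℝ} {C : ℝ} (hg : Continuous g)
    (h : ∀ a b, g a ≤ g b * C) (x : ℝ) :
    (∫ y in (0 : ℝ)..1, g y) ≤ g x * C ∧ g x ≤ (∫ y in (0 : ℝ)..1, g y) * C := by
  have hint : IntervalIntegrable g MeasureTheory.volume 0 1 := hg.intervalIntegrable 0 1
  constructor
  · simpa using intervalIntegral.integral_mono_on zero_le_one hint intervalIntegrable_const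
      fun a _ => h a x
  · simpa [intervalIntegral.integral_mul_const] using
      intervalIntegral.integral_mono_on zero_le_one intervalIntegrable_const
        (hint.mul_const C) fun b _ => h x b

theorem Function.Periodic.csInf_image_Icc_le {f : ℝ → ℝ} {c : ℝ} (h : Periodic f c) (hc : 0 < c)
    (hf : Continuous f) (a x : ℝ) : sInf (f '' Icc a (a + c)) ≤ f x :=
  csInf_le (isCompact_Icc.image hf).bddBelow (h.image_Icc hc a ▸ mem_range_self x)

theorem Function.Periodic.le_csSup_image_Icc {f : ℝ → ℝ} {c : ℝ} (h : Periodic f c) (hc : 0 < c)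
    (hf : Continuous f) (a x : ℝ) : f x ≤ sSup (f '' Icc a (a + c)) :=
  le_csSup (isCompact_Icc.image hf).bddAbove (h.image_Icc hc a ▸ mem_range_self x)

theorem stmt1_general
    (G V f₁ f₂ : ℝ → ℝ) (H₁ H₂ θ₁ θ₂ : ℝ)
    (hG : ContDiff ℝ 1 G)
    (hf₁ : ContDiff ℝ 1 f₁) (hf₂ : ContDiff ℝ 1 f₂)
    (hf₁per : Function.Periodic f₁ 1) (hf₂per : Function.Periodic f₂ 1)
    (hθ₁ : (∫ x in (0:ℝ)..1, f₁ x) = θ₁)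
    (hθ₂ : (∫ x in (0:ℝ)..1, f₂ x) = θ₂)
    (hlt : ∀ x, f₁ x < f₂ x)
    (hode₁ : ∀ x, deriv f₁ x + G (f₁ x) + V x = H₁)
    (hode₂ : ∀ x, deriv f₂ x + G (f₂ x) + V x = H₂)
    (K : ℝ)
    (hK : K = sSup ((fun p => |deriv G p|) ''
      Set.Icc (sInf (f₁ '' Set.Icc 0 1)) (sSup (f₂ '' Set.Icc 0 1)))) :
    ∀ x, (θ₂ - θ₁) * Real.exp (-K) ≤ f₂ x - f₁ x ∧
      f₂ x - f₁ x ≤ (θ₂ - θ₁) * Real.exp K := by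
  have hf₁d := hf₁.differentiable one_ne_zero
  have hf₂d := hf₂.differentiable one_ne_zero
  have hf₁_ge : ∀ x, sInf (f₁ '' Icc 0 1) ≤ f₁ x := fun x => by
    simpa using hf₁per.csInf_image_Icc_le one_pos hf₁.continuous 0 x
  have hf₂_le : ∀ x, f₂ x ≤ sSup (f₂ '' Icc 0 1) := fun x => by
    simpa using hf₂per.le_csSup_image_Icc one_pos hf₂.continuous 0 x
  have hG'_le : ∀ p ∈ Icc (sInf (f₁ '' Icc 0 1)) (sSup (f₂ '' Icc 0 1)), ‖deriv G p‖ ≤ K :=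
    fun p hp => hK ▸ le_csSup
      (isCompact_Icc.image (hG.continuous_deriv le_rfl).abs).bddAbove (mem_image_of_mem _ hp)
  have hK₀ : 0 ≤ K := (norm_nonneg _).trans
    (hG'_le _ ⟨hf₁_ge 0, (hlt 0).le.trans (hf₂_le 0)⟩)
  have hG_lip : ∀ x, |G (f₂ x) - G (f₁ x)| ≤ K * (f₂ x - f₁ x) := fun x => by
    simpa [abs_of_pos (sub_pos.mpr (hlt x))] using
      (convex_Icc _ _).norm_image_sub_le_of_norm_deriv_le
        (fun p _ => hG.differentiable one_ne_zero p) hG'_le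
        ⟨hf₁_ge x, (hlt x).le.trans (hf₂_le x)⟩ ⟨(hf₁_ge x).trans (hlt x).le, hf₂_le x⟩
  have hderiv : ∀ x, |deriv (f₂ - f₁) x - (H₂ - H₁)| ≤ K * (f₂ - f₁) x := fun x => by
    rw [deriv_sub (hf₂d x) (hf₁d x), Pi.sub_apply, ← abs_neg]
    convert hG_lip x using 2
    linarith [hode₁ x, hode₂ x]
  have hharnack := (hf₂per.sub hf₁per).le_mul_exp_of_abs_deriv_sub_le (hf₂d.sub hf₁d)
    (fun y => (sub_pos.mpr (hlt y)).le) hK₀ hderiv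
  have hmean : ∫ x in (0 : ℝ)..1, (f₂ - f₁) x = θ₂ - θ₁ := by
    rw [← hθ₁, ← hθ₂, ← intervalIntegral.integral_sub (hf₂.continuous.intervalIntegrable 0 1)
      (hf₁.continuous.intervalIntegrable 0 1)]
    rfl
  intro x
  obtain ⟨hlower, hupper⟩ :=
    integral_le_mul_and_le_integral_mul (hf₂.continuous.sub hf₁.continuous) hharnack x
  rw [hmean] at hlower hupper
  refine ⟨?_, hupper⟩
  rwa [exp_neg, ← div_eq_mul_inv, div_le_iff₀ (exp_pos K)]

theorem stmt1
    (G V f₁ f₂ : ℝ → ℝ) (H₁ H₂ θ₁ θ₂ : ℝ)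
    (hG : ContDiff ℝ 1 G)
    (hVper : Function.Periodic V 1)
    (hf₁ : ContDiff ℝ 1 f₁) (hf₂ : ContDiff ℝ 1 f₂)
    (hf₁per : Function.Periodic f₁ 1) (hf₂per : Function.Periodic f₂ 1)
    (hθ₁ : (∫ x in (0:ℝ)..1, f₁ x) = θ₁)
    (hθ₂ : (∫ x in (0:ℝ)..1, f₂ x) = θ₂)
    (hθ : θ₁ < θ₂)
    (hlt : ∀ x, f₁ x < f₂ x)
    (hode₁ : ∀ x, deriv f₁ x + G (f₁ x) + V x = H₁)
    (hode₂ : ∀ x, deriv f₂ x + G (f₂ x) + V x = H₂)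
    (K : ℝ)
    (hK : K = sSup ((fun p => |deriv G p|) ''
      Set.Icc (sInf (f₁ '' Set.Icc 0 1)) (sSup (f₂ '' Set.Icc 0 1)))) :
    ∀ x, (θ₂ - θ₁) * Real.exp (-K) ≤ f₂ x - f₁ x ∧
      f₂ x - f₁ x ≤ (θ₂ - θ₁) * Real.exp K :=
  stmt1_general G V f₁ f₂ H₁ H₂ θ₁ θ₂ hG hf₁ hf₂ hf₁per hf₂per hθ₁ hθ₂ hlt hode₁ hode₂ K hK
end

section
/- Let G : ℝ → ℝ be C¹ and p₁ < p₂ with G'(p₁) < 0 < G'(p₂), and L = G'(p₂)/(G'(p₂) − G'(p₁)). For any ℓ ∈ (0, min(L,1−L)), there exists a 1-periodic function f ∈ C^{1,1}(ℝ) with p₁ ≤ f(x) ≤ p₂ for all x, f(x) = p₁ for x ∈ [0, L−ℓ], f(x) = p₂ for x ∈ [L, 1−ℓ], and ∫₀¹ G'(f(x)) dx = 0. -/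
/-!
The admissible profiles form a convex set, and `f ↦ ∫₀¹ G'(f)` is continuous along segments,
so by the intermediate value theorem it suffices to find one admissible profile with nonpositive
integral and one with nonnegative integral. Write `f = p₁ + (p₂ - p₁) φ` with `φ` a smoothed
indicator of an interval `[s, t]` with ramps of width `δ`; then `∫₀¹ G'(f)` is
`(1 - (t - s)) G'(p₁) + (t - s) G'(p₂)` up to `O(δ)`, and `L G'(p₁) + (1 - L) G'(p₂) = 0`.
Taking `[s, t] = [L, 1 - ℓ]` (plateau length `1 - L - ℓ`) gives `-ℓ (G'(p₂) - G'(p₁)) + O(δ) < 0`,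
and `[s, t] ≈ [L - ℓ, 1]` (plateau length `≈ 1 - L + ℓ`) gives `≈ ℓ (G'(p₂) - G'(p₁)) > 0`.
Both vanish near `0` and `1`, so the resulting profile on `[0, 1]` extends `1`-periodically as
`x ↦ f (fract x)` without losing regularity.
-/

open Set Filter Topology Int

theorem Function.Periodic.exists_lipschitzWith {E : Type*} [NormedAddCommGroup E]
    [NormedSpace ℝ E] {g : ℝ → E} {T : ℝ} (hg : ContDiff ℝ 1 g) (hper : Function.Periodic g T)
    (hT : T ≠ 0) : ∃ C, LipschitzWith C g := by
  have hper' : Function.Periodic (deriv g) T := fun x => by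
    rw [← deriv_comp_add_const, hper.funext]
  obtain ⟨C, hC⟩ :=
    (hper'.isBounded_of_continuous hT (hg.continuous_deriv le_rfl)).exists_norm_le
  refine ⟨C.toNNReal, lipschitzWith_of_nnnorm_deriv_le (hg.differentiable one_ne_zero)
    fun x => ?_⟩
  rw [← NNReal.coe_le_coe, coe_nnnorm, Real.coe_toNNReal']
  exact (hC _ (mem_range_self x)).trans (le_max_left _ _)

theorem comp_fract_eventuallyEq {α : Type*} {W : ℝ → α} {c : α} (h₀ : W =ᶠ[𝓝 0] fun _ => c)
    (h₁ : W =ᶠ[𝓝 1] fun _ => c) (x : ℝ) : W ∘ fract =ᶠ[𝓝 x] fun t => W (t - ⌊x⌋) := by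
  rcases (floor_le x).eq_or_lt with hx | hx
  · have hsub : Tendsto (fun t => t - (⌊x⌋ : ℝ)) (𝓝 x) (𝓝 0) := by
      simpa [hx] using (continuous_sub_right (⌊x⌋ : ℝ)).tendsto x
    -- at an integer, `fract` approaches `1` from the left and `0` from the right
    have hfract : ∀ᶠ t in 𝓝 x, W (fract t) = c := by
      rw [← hx, ← nhdsLT_sup_nhdsGE, eventually_sup]
      exact ⟨(tendsto_fract_left _).mono_right nhdsWithin_le_nhds |>.eventually h₁,
        (tendsto_fract_right _).mono_right nhdsWithin_le_nhds |>.eventually h₀⟩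
    filter_upwards [hfract, hsub.eventually h₀] with t ht ht'
    rw [Function.comp_apply, ht, ht']
  · filter_upwards [Ioo_mem_nhds hx (lt_floor_add_one x)] with t ht
    have : ⌊t⌋ = ⌊x⌋ := floor_eq_iff.2 ⟨ht.1.le, ht.2⟩
    rw [Function.comp_apply, ← self_sub_floor, this]

theorem comp_fract_eqOn_Icc {α : Type*} {W : ℝ → α} (h : W 1 = W 0) :
    EqOn (W ∘ fract) W (Icc 0 1) := by
  intro x hx
  rcases hx.2.eq_or_lt with rfl | hx1
  · simp [h]
  · simp [fract_eq_self.2 ⟨hx.1, hx1⟩]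

section PeriodicExtension

variable {E : Type*} [NormedAddCommGroup E] [NormedSpace ℝ E] {W : ℝ → E} {c : E}

theorem contDiff_comp_fract {n : WithTop ℕ∞} (hW : ContDiff ℝ n W)
    (h₀ : W =ᶠ[𝓝 0] fun _ => c) (h₁ : W =ᶠ[𝓝 1] fun _ => c) : ContDiff ℝ n (W ∘ fract) :=
  contDiff_iff_contDiffAt.2 fun x =>
    (hW.comp (contDiff_id.sub contDiff_const)).contDiffAt.congr_of_eventuallyEq
      (comp_fract_eventuallyEq h₀ h₁ x)

theorem deriv_comp_fract (h₀ : W =ᶠ[𝓝 0] fun _ => c) (h₁ : W =ᶠ[𝓝 1] fun _ => c) :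
    deriv (W ∘ fract) = deriv W ∘ fract := by
  funext x
  rw [(comp_fract_eventuallyEq h₀ h₁ x).deriv_eq, deriv_comp_sub_const, self_sub_floor]
  rfl

theorem deriv_eventuallyEq_zero {x : ℝ} (h : W =ᶠ[𝓝 x] fun _ => c) :
    deriv W =ᶠ[𝓝 x] fun _ => 0 := by
  simpa using h.deriv

theorem exists_lipschitzWith_deriv_comp_fract (hW : ContDiff ℝ 2 W)
    (h₀ : W =ᶠ[𝓝 0] fun _ => c) (h₁ : W =ᶠ[𝓝 1] fun _ => c) :
    ∃ C, LipschitzWith C (deriv (W ∘ fract)) := by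
  rw [deriv_comp_fract h₀ h₁]
  exact ((fract_periodic ℝ).comp _).exists_lipschitzWith
    (contDiff_comp_fract (hW.deriv' (n := 1)) (deriv_eventuallyEq_zero h₀)
      (deriv_eventuallyEq_zero h₁)) one_ne_zero

end PeriodicExtension

structure IsSmoothPlateau (φ : ℝ → ℝ) (s t a b : ℝ) : Prop where
  contDiff : ContDiff ℝ 2 φ
  mem_Icc : ∀ x, φ x ∈ Icc 0 1
  eqOn_one : EqOn φ 1 (Icc s t)
  eq_zero : ∀ x ∉ Ioo a b, φ x = 0

theorem exists_isSmoothPlateau {s t δ : ℝ} (hst : s < t) (hδ : 0 < δ) :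
    ∃ φ, IsSmoothPlateau φ s t (s - δ) (t + δ) := by
  let φ : ContDiffBump ((s + t) / 2) :=
    ⟨(t - s) / 2, (t - s) / 2 + δ, by linarith, by linarith⟩
  refine ⟨φ, φ.contDiff, fun x => ⟨φ.nonneg, φ.le_one⟩,
    fun x hx => φ.one_of_mem_closedBall ?_, fun x hx => φ.zero_of_le_dist ?_⟩
  · change |x - (s + t) / 2| ≤ (t - s) / 2
    exact abs_le.2 ⟨by linarith [hx.1], by linarith [hx.2]⟩
  · change (t - s) / 2 + δ ≤ |x - (s + t) / 2|
    rw [mem_Ioo, not_and_or, not_lt, not_lt] at hx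
    rcases hx with hx | hx
    · exact le_abs.2 (Or.inr (by linarith))
    · exact le_abs.2 (Or.inl (by linarith))

namespace IsSmoothPlateau

variable {φ φ₀ φ₁ : ℝ → ℝ} {s t a b : ℝ}

theorem mono {s' t' a' b' : ℝ} (h : IsSmoothPlateau φ s t a b) (hs : s ≤ s') (ht : t' ≤ t)
    (ha : a' ≤ a) (hb : b ≤ b') : IsSmoothPlateau φ s' t' a' b' :=
  ⟨h.contDiff, h.mem_Icc, h.eqOn_one.mono (Icc_subset_Icc hs ht),
    fun x hx => h.eq_zero x fun hx' => hx (Ioo_subset_Ioo ha hb hx')⟩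

theorem convexCombination (h₀ : IsSmoothPlateau φ₀ s t a b) (h₁ : IsSmoothPlateau φ₁ s t a b)
    {r : ℝ} (hr : r ∈ Icc (0 : ℝ) 1) :
    IsSmoothPlateau (fun x => (1 - r) * φ₀ x + r * φ₁ x) s t a b := by
  refine ⟨(contDiff_const.mul h₀.contDiff).add (contDiff_const.mul h₁.contDiff), fun x => ?_,
    fun x hx => ?_, fun x hx => ?_⟩
  · exact convex_Icc (0 : ℝ) 1 (h₀.mem_Icc x) (h₁.mem_Icc x) (by linarith [hr.2]) hr.1 (by ring)
  · simp [h₀.eqOn_one hx, h₁.eqOn_one hx]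
  · simp [h₀.eq_zero x hx, h₁.eq_zero x hx]

theorem eventuallyEq_nhds_zero (h : IsSmoothPlateau φ s t a b) (ha : 0 < a) :
    φ =ᶠ[𝓝 0] fun _ => 0 := by
  filter_upwards [Iio_mem_nhds ha] with x hx
  exact h.eq_zero x fun h => hx.not_gt h.1

theorem eventuallyEq_nhds_one (h : IsSmoothPlateau φ s t a b) (hb : b < 1) :
    φ =ᶠ[𝓝 1] fun _ => 0 := by
  filter_upwards [Ioi_mem_nhds hb] with x hx
  exact h.eq_zero x fun h => hx.not_gt h.2

theorem abs_integral_comp_sub_le {g : ℝ → ℝ} {δ K : ℝ}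
    (hφ : IsSmoothPlateau φ s t (s - δ) (t + δ)) (hg : Continuous g)
    (hK : ∀ y ∈ Icc (0 : ℝ) 1, |g y| ≤ K) (hδ : 0 ≤ δ) (hs : δ ≤ s) (hst : s ≤ t)
    (ht : t + δ ≤ 1) :
    |(∫ x in (0 : ℝ)..1, g (φ x)) - ((1 - (t - s)) * g 0 + (t - s) * g 1)| ≤ 4 * K * δ := by
  have hint (u v : ℝ) : IntervalIntegrable (fun x => g (φ x)) MeasureTheory.volume u v :=
    (hg.comp hφ.contDiff.continuous).intervalIntegrable u v
  have hsplit (u v w : ℝ) :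
      (∫ x in u..w, g (φ x)) = (∫ x in u..v, g (φ x)) + ∫ x in v..w, g (φ x) :=
    (intervalIntegral.integral_add_adjacent_intervals (hint u v) (hint v w)).symm
  have hconst {u v : ℝ} (y : ℝ) (huv : u ≤ v) (h : ∀ x ∈ Icc u v, φ x = y) :
      ∫ x in u..v, g (φ x) = (v - u) * g y := by
    rw [intervalIntegral.integral_congr (g := fun _ => g y) fun x hx => by
      rw [uIcc_of_le huv] at hx; simp only [h x hx], intervalIntegral.integral_const, smul_eq_mul]
  have hramp (u : ℝ) : |∫ x in u..u + δ, g (φ x)| ≤ K * δ := by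
    simpa [abs_of_nonneg hδ] using intervalIntegral.norm_integral_le_of_norm_le_const
      (f := fun x => g (φ x)) (a := u) (b := u + δ) fun x _ => hK _ (hφ.mem_Icc x)
  have hleft : ∫ x in (0 : ℝ)..s - δ, g (φ x) = (s - δ - 0) * g 0 :=
    hconst 0 (by linarith) fun x hx => hφ.eq_zero x fun h => hx.2.not_gt h.1
  have hmid : ∫ x in s..t, g (φ x) = (t - s) * g 1 := hconst 1 hst hφ.eqOn_one
  have hright : ∫ x in t + δ..1, g (φ x) = (1 - (t + δ)) * g 0 :=
    hconst 0 ht fun x hx => hφ.eq_zero x fun h => hx.1.not_gt h.2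
  have hramp₁ := hramp (s - δ)
  have hramp₂ := hramp t
  rw [sub_add_cancel] at hramp₁
  rw [hsplit 0 (s - δ) 1, hsplit (s - δ) s 1, hsplit s t 1, hsplit t (t + δ) 1, hleft, hmid,
    hright]
  have hg₀ := abs_le.1 (hK 0 ⟨le_rfl, zero_le_one⟩)
  rw [abs_le] at hramp₁ hramp₂ ⊢
  constructor <;> nlinarith [hramp₁.1, hramp₁.2, hramp₂.1, hramp₂.2, hg₀.1, hg₀.2]

end IsSmoothPlateau

theorem exists_integral_comp_convexCombination_eq_zero {g φ₀ φ₁ : ℝ → ℝ} {a b : ℝ}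
    (hg : Continuous g) (hφ₀ : Continuous φ₀) (hφ₁ : Continuous φ₁)
    (h₀ : ∫ x in a..b, g (φ₀ x) ≤ 0) (h₁ : 0 ≤ ∫ x in a..b, g (φ₁ x)) :
    ∃ r ∈ Icc (0 : ℝ) 1, ∫ x in a..b, g ((1 - r) * φ₀ x + r * φ₁ x) = 0 := by
  have hcont : Continuous fun r => ∫ x in a..b, g ((1 - r) * φ₀ x + r * φ₁ x) :=
    intervalIntegral.continuous_parametric_intervalIntegral_of_continuous'
      (f := fun r x => g ((1 - r) * φ₀ x + r * φ₁ x)) (by fun_prop) a b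
  exact intermediate_value_Icc zero_le_one hcont.continuousOn
    ⟨by simpa using h₀, by simpa using h₁⟩

theorem exists_ramp_width {ℓ κ K : ℝ} (hℓ : 0 < ℓ) (hκ : 0 < κ) :
    ∃ δ > 0, 3 * δ < ℓ ∧ 4 * K * δ < (ℓ - 3 * δ) * κ := by
  have h : ∀ᶠ δ in 𝓝 (0 : ℝ), 3 * δ < ℓ ∧ 4 * K * δ < (ℓ - 3 * δ) * κ :=
    (ContinuousAt.eventually_lt (by fun_prop) (by fun_prop) (by simpa using hℓ)).and
      (ContinuousAt.eventually_lt (by fun_prop) (by fun_prop) (by simpa using mul_pos hℓ hκ))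
  obtain ⟨δ, hδ, hδ'⟩ := ((h.filter_mono (nhdsWithin_le_nhds (s := Ioi 0))).and
    self_mem_nhdsWithin).exists
  exact ⟨δ, hδ', hδ⟩

theorem exists_isSmoothPlateau_integral_comp_eq_zero {g : ℝ → ℝ} (hg : Continuous g)
    (hg₀ : g 0 < 0) (hg₁ : 0 < g 1) {L ℓ : ℝ} (hL : L * g 0 + (1 - L) * g 1 = 0)
    (hℓ : 0 < ℓ) (hℓL : ℓ < L) (hℓL' : ℓ < 1 - L) :
    ∃ ψ, ∃ β < 1, IsSmoothPlateau ψ L (1 - ℓ) (L - ℓ) β ∧ ∫ x in (0 : ℝ)..1, g (ψ x) = 0 := by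
  obtain ⟨K, hK⟩ := isCompact_Icc.exists_bound_of_continuousOn (hg.continuousOn (s := Icc 0 1))
  have hκ : 0 < g 1 - g 0 := sub_pos.2 (hg₀.trans hg₁)
  obtain ⟨δ, hδ, hδℓ, hδK⟩ := exists_ramp_width (K := K) hℓ hκ
  obtain ⟨φ₀, hφ₀⟩ := exists_isSmoothPlateau (by linarith : L < 1 - ℓ) hδ
  obtain ⟨φ₁, hφ₁⟩ := exists_isSmoothPlateau (by linarith : L - ℓ + δ < 1 - 2 * δ) hδ
  have hI₀ := hφ₀.abs_integral_comp_sub_le hg hK hδ.le (by linarith) (by linarith) (by linarith)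
  have hI₁ := hφ₁.abs_integral_comp_sub_le hg hK hδ.le (by linarith) (by linarith) (by linarith)
  rw [abs_le] at hI₀ hI₁
  obtain ⟨r, hr, hψ⟩ := exists_integral_comp_convexCombination_eq_zero hg
    hφ₀.contDiff.continuous hφ₁.contDiff.continuous
    (by linarith [mul_pos hδ hκ]) (by linarith)
  refine ⟨_, 1 - δ, by linarith, IsSmoothPlateau.convexCombination ?_ ?_ hr, hψ⟩
  · exact hφ₀.mono le_rfl le_rfl (by linarith) (by linarith)
  · exact hφ₁.mono (by linarith) (by linarith) (by linarith) (by linarith)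

theorem mul_add_one_sub_mul_eq_zero_of_eq_div {a b L : ℝ} (hab : a ≠ b) (hL : L = b / (b - a)) :
    L * a + (1 - L) * b = 0 := by
  rw [hL]
  field_simp [sub_ne_zero.2 hab.symm]
  ring

theorem stmt3
    (G : ℝ → ℝ) (p₁ p₂ L : ℝ)
    (hG : ContDiff ℝ 1 G) (hp : p₁ < p₂)
    (h₁ : deriv G p₁ < 0) (h₂ : 0 < deriv G p₂)
    (hL : L = deriv G p₂ / (deriv G p₂ - deriv G p₁))
    (ℓ : ℝ) (hℓ : ℓ ∈ Set.Ioo (0:ℝ) (min L (1 - L))) :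
    ∃ f : ℝ → ℝ, ContDiff ℝ 1 f ∧ (∃ C, LipschitzWith C (deriv f)) ∧
      Function.Periodic f 1 ∧
      (∀ x, f x ∈ Set.Icc p₁ p₂) ∧
      (∀ x ∈ Set.Icc (0:ℝ) (L - ℓ), f x = p₁) ∧
      (∀ x ∈ Set.Icc L (1 - ℓ), f x = p₂) ∧
      (∫ x in (0:ℝ)..1, deriv G (f x)) = 0 := by
  obtain ⟨hℓ, hℓL, hℓL'⟩ : 0 < ℓ ∧ ℓ < L ∧ ℓ < 1 - L := by simpa [lt_min_iff] using hℓ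
  set g := fun y => deriv G (p₁ + (p₂ - p₁) * y)
  have hgL : L * g 0 + (1 - L) * g 1 = 0 := by
    simpa [g] using mul_add_one_sub_mul_eq_zero_of_eq_div (h₁.trans h₂).ne hL
  have hg : Continuous g := (hG.continuous_deriv le_rfl).comp (by fun_prop)
  obtain ⟨ψ, β, hβ, hψ, hψg⟩ := exists_isSmoothPlateau_integral_comp_eq_zero hg
    (by simpa [g] using h₁) (by simpa [g] using h₂) hgL hℓ hℓL hℓL'
  set W := fun y => p₁ + (p₂ - p₁) * ψ y
  have hW : ContDiff ℝ 2 W := contDiff_const.add (contDiff_const.mul hψ.contDiff)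
  have hW₀ : W =ᶠ[𝓝 0] fun _ => p₁ + (p₂ - p₁) * 0 :=
    (hψ.eventuallyEq_nhds_zero (sub_pos.2 hℓL)).fun_comp fun y => p₁ + (p₂ - p₁) * y
  have hW₁ : W =ᶠ[𝓝 1] fun _ => p₁ + (p₂ - p₁) * 0 :=
    (hψ.eventuallyEq_nhds_one hβ).fun_comp fun y => p₁ + (p₂ - p₁) * y
  have hfract : EqOn (W ∘ fract) W (Icc 0 1) :=
    comp_fract_eqOn_Icc (hW₁.eq_of_nhds.trans hW₀.eq_of_nhds.symm)
  refine ⟨W ∘ fract, (contDiff_comp_fract hW hW₀ hW₁).of_le one_le_two,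
    exists_lipschitzWith_deriv_comp_fract hW hW₀ hW₁, (fract_periodic ℝ).comp W, fun x => ?_,
    fun x hx => ?_, fun x hx => ?_, ?_⟩
  · obtain ⟨h0, h1⟩ := hψ.mem_Icc (fract x)
    constructor <;> dsimp only [Function.comp_apply, W] <;> nlinarith
  · rw [hfract ⟨hx.1, by linarith [hx.2]⟩]
    simp [W, hψ.eq_zero x fun h => h.1.not_ge hx.2]
  · rw [hfract ⟨by linarith [hx.1], by linarith [hx.2]⟩]
    simp [W, hψ.eqOn_one hx]
  · refine (intervalIntegral.integral_congr fun x hx => ?_).trans hψg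
    rw [uIcc_of_le zero_le_one] at hx
    exact congrArg (deriv G) (hfract hx)
end

section
/- Let H : ℝ × ℝ → ℝ be continuous with x ↦ H(p,x) 1-periodic for each p. Suppose F : ℝ → ℝ is a 1-periodic C² solution of F''(x) + H(θ + F'(x), x) = λ for some constants θ, λ ∈ ℝ. Let U(θ) = max{H(θ,x) : x ∈ [0,1]} and L(θ) = min{H(θ,x) : x ∈ [0,1]}. Then L(θ) ≤ λ ≤ U(θ). -/
/-! At a maximum point `x₀` of the periodic function `F` we have `F' x₀ = 0` and `F'' x₀ ≤ 0`,
so the equation gives `λ = F'' x₀ + H(θ, x₀) ≤ H(θ, x₀) ≤ U(θ)`; symmetrically, a minimum point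
of `F` gives `λ ≥ L(θ)`. Periodicity lets both points be taken in `[0, 1]`. -/

open Set Filter

/-- If `f'' x₀ < 0`, the second-derivative test makes the local minimum `x₀` also a local
maximum, so `f` is locally constant near `x₀` and `f'' x₀ = 0`. -/
theorem IsLocalMin.deriv_deriv_nonneg {f : ℝ → ℝ} {x₀ : ℝ} (h : IsLocalMin f x₀)
    (hc : ContinuousAt f x₀) : 0 ≤ deriv (deriv f) x₀ := by
  by_contra! hneg
  have hmax : IsLocalMax f x₀ := isLocalMax_of_deriv_deriv_neg hneg h.deriv_eq_zero hc
  have hconst : f =ᶠ[nhds x₀] fun _ => f x₀ :=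
    (h.and hmax).mono fun y hy => le_antisymm hy.2 hy.1
  have hderiv : deriv f =ᶠ[nhds x₀] fun _ => 0 := hconst.deriv.trans (.of_eq (deriv_const' _))
  rw [hderiv.deriv_eq, deriv_const] at hneg
  exact hneg.false

theorem IsLocalMax.deriv_deriv_nonpos {f : ℝ → ℝ} {x₀ : ℝ} (h : IsLocalMax f x₀)
    (hc : ContinuousAt f x₀) : deriv (deriv f) x₀ ≤ 0 := by
  have : 0 ≤ deriv (deriv (-f)) x₀ := h.neg.deriv_deriv_nonneg hc.neg
  rw [show deriv (-f) = -deriv f from deriv.neg', deriv.neg] at this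
  linarith

namespace Function.Periodic

variable {α : Type*} [LinearOrder α] [TopologicalSpace α] [OrderClosedTopology α]
  {f : ℝ → α} {c : ℝ}

theorem exists_mem_Icc_isMaxOn_univ (hp : Periodic f c) (hc : 0 < c) (hf : Continuous f) :
    ∃ x ∈ Icc 0 c, IsMaxOn f univ x := by
  obtain ⟨x, hx, hmax⟩ := isCompact_Icc.exists_isMaxOn (nonempty_Icc.2 hc.le) hf.continuousOn
  refine ⟨x, hx, fun y _ => ?_⟩
  obtain ⟨z, hz, hyz⟩ := hp.exists_mem_Ico₀ hc y
  rw [mem_ofPred_eq, hyz]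
  exact hmax (Ico_subset_Icc_self hz)

theorem exists_mem_Icc_isMinOn_univ (hp : Periodic f c) (hc : 0 < c) (hf : Continuous f) :
    ∃ x ∈ Icc 0 c, IsMinOn f univ x := by
  obtain ⟨x, hx, hmin⟩ := isCompact_Icc.exists_isMinOn (nonempty_Icc.2 hc.le) hf.continuousOn
  refine ⟨x, hx, fun y _ => ?_⟩
  obtain ⟨z, hz, hyz⟩ := hp.exists_mem_Ico₀ hc y
  rw [mem_ofPred_eq, hyz]
  exact hmin (Ico_subset_Icc_self hz)

end Function.Periodic

theorem stmt14_general
    (H : ℝ → ℝ → ℝ) (θ lam : ℝ) (F : ℝ → ℝ)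
    (hH : Continuous fun q : ℝ × ℝ => H q.1 q.2)
    (hF : ContDiff ℝ 2 F) (hFper : Function.Periodic F 1)
    (hode : ∀ x, deriv (deriv F) x + H (θ + deriv F x) x = lam) :
    sInf ((H θ) '' Set.Icc 0 1) ≤ lam ∧ lam ≤ sSup ((H θ) '' Set.Icc 0 1) := by
  have hHθ : Continuous (H θ) := hH.comp (Continuous.prodMk_right θ)
  obtain ⟨x₁, hx₁, hmin⟩ := hFper.exists_mem_Icc_isMinOn_univ one_pos hF.continuous
  obtain ⟨x₀, hx₀, hmax⟩ := hFper.exists_mem_Icc_isMaxOn_univ one_pos hF.continuous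
  have hmin' : IsLocalMin F x₁ := hmin.isLocalMin univ_mem
  have hmax' : IsLocalMax F x₀ := hmax.isLocalMax univ_mem
  have hode₁ := hode x₁
  have hode₀ := hode x₀
  rw [hmin'.deriv_eq_zero, add_zero] at hode₁
  rw [hmax'.deriv_eq_zero, add_zero] at hode₀
  have hF₁ := hmin'.deriv_deriv_nonneg hF.continuous.continuousAt
  have hF₀ := hmax'.deriv_deriv_nonpos hF.continuous.continuousAt
  have hL := csInf_le (isCompact_Icc.bddBelow_image hHθ.continuousOn) (mem_image_of_mem _ hx₁)
  have hU := le_csSup (isCompact_Icc.bddAbove_image hHθ.continuousOn) (mem_image_of_mem _ hx₀)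
  constructor <;> linarith

theorem stmt14
    (H : ℝ → ℝ → ℝ) (θ lam : ℝ) (F : ℝ → ℝ)
    (hH : Continuous fun q : ℝ × ℝ => H q.1 q.2)
    (hHper : ∀ p, Function.Periodic (H p) 1)
    (hF : ContDiff ℝ 2 F) (hFper : Function.Periodic F 1)
    (hode : ∀ x, deriv (deriv F) x + H (θ + deriv F x) x = lam) :
    sInf ((H θ) '' Set.Icc 0 1) ≤ lam ∧ lam ≤ sSup ((H θ) '' Set.Icc 0 1) :=
  stmt14_general H θ lam F hH hF hFper hode
end

section
/- Let H : ℝ × ℝ → ℝ be continuous, coercive in p uniformly in x, and 1-periodic in x. Suppose F : ℝ → ℝ is a 1-periodic C² solution of F''(x) + H(θ + F'(x), x) = λ with L(θ) ≤ λ ≤ U(θ), where U(θ) = max_{x∈[0,1]} H(θ,x). Define p₋(θ) = min_{x∈[0,1]} min{p : H(p,x) ≤ U(θ)} and p₊(θ) = max_{x∈[0,1]} max{p : H(p,x) ≤ U(θ)}. Then p₋(θ) ≤ θ + F'(x) ≤ p₊(θ) for all x ∈ ℝ. -/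
/-!
`F'` is continuous and 1-periodic, so it attains a global maximum and minimum. At such a point
`F'' = 0`, so the equation gives `H (θ + F') = λ ≤ U` there; by periodicity of `H` that point can be
moved into `[0, 1]`, so `θ + max F'` and `θ + min F'` lie in the sublevel set defining `p₊` and `p₋`,
which coercivity makes bounded.
-/

open Function Set

theorem Function.Periodic.deriv {𝕜 F : Type*} [NontriviallyNormedField 𝕜] [NormedAddCommGroup F]
    [NormedSpace 𝕜 F] {f : 𝕜 → F} {c : 𝕜} (hf : Periodic f c) : Periodic (deriv f) c := fun x => by
  rw [← deriv_comp_add_const, funext hf]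

theorem Function.Periodic.exists_forall_ge_and_exists_forall_le {f : ℝ → ℝ} {c : ℝ}
    (hf : Periodic f c) (hc : c ≠ 0) (hcont : Continuous f) :
    (∃ a, ∀ y, f y ≤ f a) ∧ ∃ b, ∀ y, f b ≤ f y := by
  have hK := hf.compact_of_continuous hc hcont
  obtain ⟨_, ⟨a, rfl⟩, ha⟩ := hK.exists_isGreatest (range_nonempty f)
  obtain ⟨_, ⟨b, rfl⟩, hb⟩ := hK.exists_isLeast (range_nonempty f)
  exact ⟨⟨a, fun y => ha ⟨y, rfl⟩⟩, ⟨b, fun y => hb ⟨y, rfl⟩⟩⟩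

section Sublevel

variable (H : ℝ → ℝ → ℝ) (U : ℝ)

def sublevelMomenta : Set ℝ := {p | ∃ x ∈ Icc (0 : ℝ) 1, H p x ≤ U}

variable {H}

theorem isBounded_sublevelMomenta (hcoer : ∀ C : ℝ, ∃ R : ℝ, ∀ p x : ℝ, R ≤ |p| → C ≤ H p x) :
    Bornology.IsBounded (sublevelMomenta H U) := by
  obtain ⟨R, hR⟩ := hcoer (U + 1)
  refine isBounded_iff_forall_norm_le.2 ⟨R, fun p ⟨x, _, hpx⟩ => ?_⟩
  by_contra! hp
  linarith [hR p x (Real.norm_eq_abs p ▸ hp.le)]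

theorem mem_sublevelMomenta_of_periodic (hHper : ∀ p, Periodic (H p) 1) {p x : ℝ}
    (hpx : H p x ≤ U) : p ∈ sublevelMomenta H U := by
  obtain ⟨y, hy, hxy⟩ := (hHper p).exists_mem_Ico₀ one_pos x
  exact ⟨y, Ico_subset_Icc_self hy, hxy ▸ hpx⟩

theorem mem_sublevelMomenta_of_isLocalExtr (hHper : ∀ p, Periodic (H p) 1) {G : ℝ → ℝ}
    {θ lam x : ℝ} (hext : IsLocalExtr G x) (hode : deriv G x + H (θ + G x) x = lam)
    (hlam : lam ≤ U) : θ + G x ∈ sublevelMomenta H U := by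
  rw [hext.deriv_eq_zero, zero_add] at hode
  exact mem_sublevelMomenta_of_periodic U hHper (hode.le.trans hlam)

end Sublevel

theorem stmt15_general
    (H : ℝ → ℝ → ℝ) (θ lam U : ℝ) (F : ℝ → ℝ)
    (hcoer : ∀ C : ℝ, ∃ R : ℝ, ∀ p x : ℝ, R ≤ |p| → C ≤ H p x)
    (hHper : ∀ p, Function.Periodic (H p) 1)
    (hF : ContDiff ℝ 2 F) (hFper : Function.Periodic F 1)
    (hode : ∀ x, deriv (deriv F) x + H (θ + deriv F x) x = lam)
    (hlam : sInf ((H θ) '' Set.Icc 0 1) ≤ lam ∧ lam ≤ U)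
    (pminus pplus : ℝ)
    (hpminus : pminus = sInf {p : ℝ | ∃ x ∈ Set.Icc (0:ℝ) 1, H p x ≤ U})
    (hpplus : pplus = sSup {p : ℝ | ∃ x ∈ Set.Icc (0:ℝ) 1, H p x ≤ U}) :
    ∀ x, pminus ≤ θ + deriv F x ∧ θ + deriv F x ≤ pplus := by
  have hG : Continuous (deriv F) := hF.continuous_deriv (by norm_num)
  obtain ⟨⟨xmax, hmax⟩, ⟨xmin, hmin⟩⟩ :=
    hFper.deriv.exists_forall_ge_and_exists_forall_le one_ne_zero hG
  have hS := isBounded_sublevelMomenta U hcoer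
  have hmaxS : θ + deriv F xmax ∈ sublevelMomenta H U :=
    mem_sublevelMomenta_of_isLocalExtr U hHper
      (Or.inr (Filter.Eventually.of_forall hmax)) (hode xmax) hlam.2
  have hminS : θ + deriv F xmin ∈ sublevelMomenta H U :=
    mem_sublevelMomenta_of_isLocalExtr U hHper
      (Or.inl (Filter.Eventually.of_forall hmin)) (hode xmin) hlam.2
  intro x
  rw [hpminus, hpplus]
  constructor
  · calc sInf (sublevelMomenta H U) ≤ θ + deriv F xmin := csInf_le hS.bddBelow hminS
      _ ≤ θ + deriv F x := by linarith [hmin x]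
  · calc θ + deriv F x ≤ θ + deriv F xmax := by linarith [hmax x]
      _ ≤ sSup (sublevelMomenta H U) := le_csSup hS.bddAbove hmaxS

theorem stmt15
    (H : ℝ → ℝ → ℝ) (θ lam U : ℝ) (F : ℝ → ℝ)
    (hH : Continuous fun q : ℝ × ℝ => H q.1 q.2)
    (hcoer : ∀ C : ℝ, ∃ R : ℝ, ∀ p x : ℝ, R ≤ |p| → C ≤ H p x)
    (hHper : ∀ p, Function.Periodic (H p) 1)
    (hF : ContDiff ℝ 2 F) (hFper : Function.Periodic F 1)
    (hode : ∀ x, deriv (deriv F) x + H (θ + deriv F x) x = lam)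
    (hU : U = sSup ((H θ) '' Set.Icc 0 1))
    (hlam : sInf ((H θ) '' Set.Icc 0 1) ≤ lam ∧ lam ≤ U)
    (pminus pplus : ℝ)
    (hpminus : pminus = sInf {p : ℝ | ∃ x ∈ Set.Icc (0:ℝ) 1, H p x ≤ U})
    (hpplus : pplus = sSup {p : ℝ | ∃ x ∈ Set.Icc (0:ℝ) 1, H p x ≤ U}) :
    ∀ x, pminus ≤ θ + deriv F x ∧ θ + deriv F x ≤ pplus :=
  stmt15_general H θ lam U F hcoer hHper hF hFper hode hlam pminus pplus hpminus hpplus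
end

section
/- Let G₁ : ℝ → ℝ be even, C², with G₁(0)=0, G₁(p) > 0 and G₁'(p) > 0 for p > 0, and M := −inf{G₁''(p)/(G₁'(p))² : p > 0} ∈ (0,∞). Fix d ≥ 2 and R > 0, let J(p) = −(log(1−p)+p)/(M(d−1)), p_R = J^{−1}(R), and define the even convex C² function Ğ(p) = J(|p|) for |p| ≤ p_R and Ğ(p) = R + J'(p_R)(|p|−p_R) + ½ J''(p_R)(|p|−p_R)² for |p| > p_R. Then for every r ≤ R, the sublevel set S_r = {p ∈ ℝ^d : G₁(p₁) + Σ_{i=2}^d Ğ(p_i) ≤ r} is convex. -/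
/-!
The definition of `M` says `G₁'' + M G₁'² ≥ 0`, i.e. `exp (M G₁)` is convex. The profile `J` is
chosen so that `exp (-M (d-1) J t) = (1 - t) eᵗ`, and `φ x = (1 - |x|) e^|x|` is concave because
`φ' x = -x e^|x|` is decreasing. Since all terms are nonnegative and `Ğ > R` beyond `p_R`, points of
`S_r` satisfy `|p_i| ≤ p_R` for `i ≥ 2`; there `exp (-M Σ Ğ(p_i)) = ∏ φ(p_i)^(1/(d-1))` is a
geometric mean of positive concave functions, hence concave. So `S_r` is the sublevel set
`exp (M G₁ p₁) - e^(M r) ∏ φ(p_i)^(1/(d-1)) ≤ 0` of a convex function on the box `|p_i| ≤ p_R`.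
-/

open Real Set Finset

section GeometricMean

variable {ι : Type*} {s : Finset ι} {w : ι → ℝ}

theorem mul_prod_rpow_add_mul_prod_rpow_le (hw : ∀ i ∈ s, 0 ≤ w i) (hw1 : ∑ i ∈ s, w i = 1)
    {X Y : ι → ℝ} (hX : ∀ i ∈ s, 0 < X i) (hY : ∀ i ∈ s, 0 < Y i)
    {a b : ℝ} (ha : 0 ≤ a) (hb : 0 ≤ b) (hab : a + b = 1) :
    a * ∏ i ∈ s, X i ^ w i + b * ∏ i ∈ s, Y i ^ w i ≤ ∏ i ∈ s, (a * X i + b * Y i) ^ w i := by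
  set Z : ι → ℝ := fun i => a * X i + b * Y i
  have hZ : ∀ i ∈ s, 0 < Z i := fun i hi => by
    nlinarith [min_le_left (X i) (Y i), min_le_right (X i) (Y i), lt_min (hX i hi) (hY i hi)]
  -- weighted AM-GM for the ratios `V i / Z i`; the `X` and `Y` instances add up to `∏ Z i ^ w i`
  have amgm : ∀ V : ι → ℝ, (∀ i ∈ s, 0 ≤ V i) →
      ∏ i ∈ s, V i ^ w i ≤ (∑ i ∈ s, w i * (V i / Z i)) * ∏ i ∈ s, Z i ^ w i := by
    intro V hV
    have h := geom_mean_le_arith_mean_weighted s w (fun i => V i / Z i) hw hw1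
      fun i hi => div_nonneg (hV i hi) (hZ i hi).le
    rwa [prod_congr rfl fun i hi => div_rpow (hV i hi) (hZ i hi).le (w i), prod_div_distrib,
      div_le_iff₀ (prod_pos fun i hi => rpow_pos_of_pos (hZ i hi) _)] at h
  have hsum : a * ∑ i ∈ s, w i * (X i / Z i) + b * ∑ i ∈ s, w i * (Y i / Z i) = 1 := by
    rw [mul_sum, mul_sum, ← sum_add_distrib, ← hw1]
    refine sum_congr rfl fun i hi => ?_
    have := (hZ i hi).ne'
    field_simp
    ring
  calc a * ∏ i ∈ s, X i ^ w i + b * ∏ i ∈ s, Y i ^ w i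
      ≤ a * ((∑ i ∈ s, w i * (X i / Z i)) * ∏ i ∈ s, Z i ^ w i)
        + b * ((∑ i ∈ s, w i * (Y i / Z i)) * ∏ i ∈ s, Z i ^ w i) := by
        gcongr
        exacts [amgm X fun i hi => (hX i hi).le, amgm Y fun i hi => (hY i hi).le]
    _ = ∏ i ∈ s, Z i ^ w i := by linear_combination (∏ i ∈ s, Z i ^ w i) * hsum

theorem ConcaveOn.prod_rpow {E : Type*} [AddCommGroup E] [Module ℝ E] {K : Set E}
    (hK : Convex ℝ K) (hw : ∀ i ∈ s, 0 ≤ w i) (hw1 : ∑ i ∈ s, w i = 1) {f : ι → E → ℝ}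
    (hf : ∀ i ∈ s, ConcaveOn ℝ K (f i)) (hf0 : ∀ i ∈ s, ∀ x ∈ K, 0 < f i x) :
    ConcaveOn ℝ K fun x => ∏ i ∈ s, f i x ^ w i := by
  refine ⟨hK, fun x hx y hy a b ha hb hab => ?_⟩
  have hmix : ∀ i ∈ s, 0 ≤ a * f i x + b * f i y := fun i hi =>
    add_nonneg (mul_nonneg ha (hf0 i hi x hx).le) (mul_nonneg hb (hf0 i hi y hy).le)
  calc a • ∏ i ∈ s, f i x ^ w i + b • ∏ i ∈ s, f i y ^ w i
      ≤ ∏ i ∈ s, (a * f i x + b * f i y) ^ w i :=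
        mul_prod_rpow_add_mul_prod_rpow_le hw hw1 (fun i hi => hf0 i hi x hx)
          (fun i hi => hf0 i hi y hy) ha hb hab
    _ ≤ ∏ i ∈ s, f i (a • x + b • y) ^ w i :=
        prod_le_prod (fun i hi => rpow_nonneg (hmix i hi) _) fun i hi =>
          rpow_le_rpow (hmix i hi) ((hf i hi).2 hx hy ha hb hab) (hw i hi)

end GeometricMean

theorem monotone_mul_exp_abs : Monotone fun x : ℝ => x * exp |x| := by
  intro a b hab
  rcases le_or_gt 0 a with ha | ha
  · dsimp only
    rw [abs_of_nonneg ha, abs_of_nonneg (ha.trans hab)]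
    exact mul_le_mul hab (exp_le_exp.2 hab) (exp_pos a).le (ha.trans hab)
  rcases le_or_gt b 0 with hb | hb
  · dsimp only
    rw [abs_of_neg ha, abs_of_nonpos hb]
    nlinarith [exp_le_exp.2 (neg_le_neg hab), exp_pos (-b)]
  · nlinarith [exp_pos |a|, exp_pos |b|]

theorem hasDerivAt_one_sub_abs_mul_exp_abs (x : ℝ) :
    HasDerivAt (fun y => (1 - |y|) * exp |y|) (-x * exp |x|) x := by
  refine hasDerivAt_of_hasDerivAt_of_ne' (x := 0) (f := fun y => (1 - |y|) * exp |y|)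
    (g := fun y => -y * exp |y|) (fun y hy => ?_) (by fun_prop) (by fun_prop) x
  have habs := hasDerivAt_abs hy
  refine ((habs.const_sub 1).mul habs.exp).congr_deriv ?_
  linear_combination (-exp |y|) * abs_mul_sign y

theorem concaveOn_one_sub_abs_mul_exp_abs : ConcaveOn ℝ univ fun x : ℝ => (1 - |x|) * exp |x| := by
  refine Antitone.concaveOn_univ_of_deriv
    (fun x => (hasDerivAt_one_sub_abs_mul_exp_abs x).differentiableAt) ?_
  rw [funext fun x => (hasDerivAt_one_sub_abs_mul_exp_abs x).deriv]
  intro a b hab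
  simpa only [neg_mul, neg_le_neg_iff] using monotone_mul_exp_abs hab

theorem convexOn_exp_mul_of_deriv2_add_mul_sq_nonneg {f : ℝ → ℝ} (hf : ContDiff ℝ 2 f) {M : ℝ}
    (hM : 0 ≤ M) (h : ∀ x, 0 ≤ deriv (deriv f) x + M * deriv f x ^ 2) :
    ConvexOn ℝ univ fun x => exp (M * f x) := by
  have h₁ : ∀ x, HasDerivAt (fun x => exp (M * f x)) (exp (M * f x) * (M * deriv f x)) x :=
    fun x => ((hf.differentiable (by norm_num) x).hasDerivAt.const_mul M).exp
  have h₂ : ∀ x, HasDerivAt (fun x => exp (M * f x) * (M * deriv f x))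
      (exp (M * f x) * (M * deriv f x) * (M * deriv f x)
        + exp (M * f x) * (M * deriv (deriv f) x)) x :=
    fun x => (h₁ x).mul ((hf.differentiable_deriv_two x).hasDerivAt.const_mul M)
  have hderiv : deriv (fun x => exp (M * f x)) = fun x => exp (M * f x) * (M * deriv f x) :=
    funext fun x => (h₁ x).deriv
  refine convexOn_univ_of_deriv2_nonneg (fun x => (h₁ x).differentiableAt)
    (hderiv ▸ fun x => (h₂ x).differentiableAt) fun x => ?_
  rw [Function.iterate_succ_apply, Function.iterate_one, hderiv, (h₂ x).deriv]
  have := mul_nonneg (mul_nonneg (exp_pos (M * f x)).le hM) (h x)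
  linarith

theorem neg_le_of_eq_neg_sInf_image {α : Type*} {g : α → ℝ} {S : Set α} {M : ℝ}
    (hM : M = -sInf (g '' S)) (hM0 : M ≠ 0) {x : α} (hx : x ∈ S) : -M ≤ g x := by
  -- a set of reals that is not bounded below has `sInf = 0`
  have hbdd : BddBelow (g '' S) := by
    by_contra h
    exact hM0 (by rw [hM, Real.sInf_of_not_bddBelow h, neg_zero])
  rw [hM, neg_neg]
  exact csInf_le hbdd (mem_image_of_mem g hx)

theorem deriv_neg_of_even {f : ℝ → ℝ} (hf : ∀ x, f (-x) = f x) (x : ℝ) :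
    deriv f (-x) = -deriv f x := by
  have h := deriv_comp_neg (f := f) (x := x)
  simp only [hf] at h
  linarith

theorem deriv_neg_of_odd {f : ℝ → ℝ} (hf : ∀ x, f (-x) = -f x) (x : ℝ) :
    deriv f (-x) = deriv f x := by
  have h := deriv_comp_neg (f := f) (x := x)
  simp only [hf, deriv.fun_neg] at h
  linarith

theorem deriv2_add_mul_sq_deriv_nonneg {f : ℝ → ℝ} (hf : ContDiff ℝ 2 f)
    (heven : ∀ x, f (-x) = f x) (hf' : ∀ x, 0 < x → deriv f x ≠ 0) {M : ℝ}
    (hM : ∀ x, 0 < x → -M ≤ deriv (deriv f) x / deriv f x ^ 2) (x : ℝ) :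
    0 ≤ deriv (deriv f) x + M * deriv f x ^ 2 := by
  have hpos : ∀ x, 0 < x → 0 ≤ deriv (deriv f) x + M * deriv f x ^ 2 := fun x hx => by
    have := (le_div_iff₀ (sq_pos_of_ne_zero (hf' x hx))).1 (hM x hx)
    linarith
  have hnonneg : ∀ x, 0 ≤ x → 0 ≤ deriv (deriv f) x + M * deriv f x ^ 2 := by
    have hcont : Continuous fun x => deriv (deriv f) x + M * deriv f x ^ 2 :=
      ((hf.deriv' (n := 1)).continuous_deriv_one).add
        (continuous_const.mul ((hf.continuous_deriv (by norm_num)).pow 2))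
    have hclosed : closure (Ioi 0) ⊆ {x | 0 ≤ deriv (deriv f) x + M * deriv f x ^ 2} :=
      (isClosed_le continuous_const hcont).closure_subset_iff.2 hpos
    rw [closure_Ioi] at hclosed
    exact hclosed
  rcases le_total 0 x with hx | hx
  · exact hnonneg x hx
  · simpa [deriv_neg_of_odd (deriv_neg_of_even heven), deriv_neg_of_even heven] using
      hnonneg (-x) (neg_nonneg.2 hx)

theorem nonneg_of_even {f : ℝ → ℝ} (heven : ∀ x, f (-x) = f x) (h0 : f 0 = 0)
    (hpos : ∀ x, 0 < x → 0 ≤ f x) (x : ℝ) : 0 ≤ f x := by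
  rcases lt_trichotomy x 0 with h | rfl | h
  · simpa [heven] using hpos (-x) (neg_pos.2 h)
  · exact h0.ge
  · exact hpos x h

section J

variable {c : ℝ} {J : ℝ → ℝ}

theorem hasDerivAt_J (hJ : ∀ p, J p = -(log (1 - p) + p) / c) {p : ℝ} (hp : p < 1) :
    HasDerivAt J (((1 - p)⁻¹ - 1) / c) p := by
  have h : HasDerivAt (fun y => -(log (1 - y) + y) / c) (-(-1 / (1 - p) + 1) / c) p :=
    ((((hasDerivAt_id p).const_sub 1).log (by simp; linarith)).add
      (hasDerivAt_id p)).neg.div_const c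
  rw [funext hJ]
  exact h.congr_deriv (by ring)

theorem deriv_J_pos (hJ : ∀ p, J p = -(log (1 - p) + p) / c) (hc : 0 < c) {p : ℝ} (hp0 : 0 < p)
    (hp1 : p < 1) : 0 < deriv J p := by
  rw [(hasDerivAt_J hJ hp1).deriv]
  exact div_pos (sub_pos.2 (one_lt_inv_iff₀.2 ⟨by linarith, by linarith⟩)) hc

theorem deriv_deriv_J_nonneg (hJ : ∀ p, J p = -(log (1 - p) + p) / c) (hc : 0 ≤ c) {p : ℝ}
    (hp : p < 1) : 0 ≤ deriv (deriv J) p := by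
  have hev : deriv J =ᶠ[nhds p] fun y => ((1 - y)⁻¹ - 1) / c := by
    filter_upwards [Iio_mem_nhds hp] with y hy
    exact (hasDerivAt_J hJ hy).deriv
  have h : HasDerivAt (fun y => ((1 - y)⁻¹ - 1) / c) (-(-1) / (1 - p) ^ 2 / c) p :=
    ((((hasDerivAt_id p).const_sub 1).inv (by simp; linarith)).sub_const 1).div_const c
  rw [hev.deriv_eq, h.deriv, neg_neg]
  exact div_nonneg (by positivity) hc

theorem J_nonneg (hJ : ∀ p, J p = -(log (1 - p) + p) / c) (hc : 0 ≤ c) {t : ℝ} (ht : t < 1) :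
    0 ≤ J t := by
  have := log_le_sub_one_of_pos (show 0 < 1 - t by linarith)
  rw [hJ]
  exact div_nonneg (by linarith) hc

theorem exp_neg_mul_J (hJ : ∀ p, J p = -(log (1 - p) + p) / c) (hc : c ≠ 0) {t : ℝ}
    (ht : t < 1) : exp (-c * J t) = (1 - t) * exp t := by
  rw [hJ, show -c * (-(log (1 - t) + t) / c) = log (1 - t) + t by field_simp, exp_add,
    exp_log (by linarith)]

end J

section QuadraticExtension

variable {pR R : ℝ} {J Gb : ℝ → ℝ}

theorem abs_le_of_Gb_le
    (hGb : ∀ p, Gb p = if |p| ≤ pR then J |p|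
      else R + deriv J pR * (|p| - pR) + (1 / 2) * deriv (deriv J) pR * (|p| - pR) ^ 2)
    (hJ' : 0 < deriv J pR) (hJ'' : 0 ≤ deriv (deriv J) pR) {x : ℝ} (hx : Gb x ≤ R) :
    |x| ≤ pR := by
  by_contra h
  rw [hGb, if_neg h] at hx
  rw [not_le] at h
  nlinarith [mul_pos hJ' (sub_pos.2 h), mul_nonneg hJ'' (sq_nonneg (|x| - pR))]

theorem Gb_nonneg
    (hGb : ∀ p, Gb p = if |p| ≤ pR then J |p|
      else R + deriv J pR * (|p| - pR) + (1 / 2) * deriv (deriv J) pR * (|p| - pR) ^ 2)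
    (hJ : ∀ t, 0 ≤ t → t ≤ pR → 0 ≤ J t) (hR : 0 ≤ R) (hJ' : 0 ≤ deriv J pR)
    (hJ'' : 0 ≤ deriv (deriv J) pR) (x : ℝ) : 0 ≤ Gb x := by
  rw [hGb]
  split_ifs with h
  · exact hJ |x| (abs_nonneg x) h
  · rw [not_le] at h
    nlinarith [mul_nonneg hJ' (sub_pos.2 h).le, mul_nonneg hJ'' (sq_nonneg (|x| - pR))]

end QuadraticExtension

theorem setOf_add_sum_le_eq {ι : Type*} (s : Finset ι) (i₀ : ι) {G₁ g : ℝ → ℝ} {K : Set ℝ}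
    {r R : ℝ} (hr : r ≤ R) (hG₁ : ∀ x, 0 ≤ G₁ x) (hg : ∀ x, 0 ≤ g x)
    (hK : ∀ x, g x ≤ R → x ∈ K) :
    {p : ι → ℝ | G₁ (p i₀) + ∑ i ∈ s, g (p i) ≤ r} =
      {p | (∀ i ∈ s, p i ∈ K) ∧ G₁ (p i₀) + ∑ i ∈ s, g (p i) ≤ r} :=
  Set.ext fun p => ⟨fun (h : _ ≤ r) => ⟨fun i hi => hK _ <| by
    linarith [single_le_sum (fun j _ => hg (p j)) hi, hG₁ (p i₀)], h⟩, And.right⟩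

theorem convex_setOf_add_sum_le {ι : Type*} {s : Finset ι} (hs : s.Nonempty) (i₀ : ι) {M : ℝ}
    (hM : 0 < M) {G₁ g : ℝ → ℝ} {K : Set ℝ} (hK : Convex ℝ K)
    (hG₁ : ConvexOn ℝ univ fun x => exp (M * G₁ x))
    (hg : ConcaveOn ℝ K fun x => exp (-(M * #s) * g x)) (r : ℝ) :
    Convex ℝ {p : ι → ℝ | (∀ i ∈ s, p i ∈ K) ∧ G₁ (p i₀) + ∑ i ∈ s, g (p i) ≤ r} := by
  set E : Set (ι → ℝ) := {p | ∀ i ∈ s, p i ∈ K}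
  have hE : Convex ℝ E := convex_pi fun i _ => hK
  have hn : (0 : ℝ) < #s := by exact_mod_cast hs.card_pos
  have hw1 : ∑ _i ∈ s, (#s : ℝ)⁻¹ = 1 := by
    rw [sum_const, nsmul_eq_mul, mul_inv_cancel₀ hn.ne']
  have hrpow : ∀ y, exp (-(M * #s) * y) ^ (#s : ℝ)⁻¹ = exp (-(M * y)) := fun y => by
    rw [← exp_mul]
    congr 1
    field_simp
  have hconc : ConcaveOn ℝ E fun p =>
      exp (M * r) • ∏ i ∈ s, exp (-(M * #s) * g (p i)) ^ (#s : ℝ)⁻¹ :=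
    (ConcaveOn.prod_rpow hE (fun _ _ => by positivity) hw1
      (fun i hi => (hg.comp_linearMap (LinearMap.proj i : (ι → ℝ) →ₗ[ℝ] ℝ)).subset
        (show E ⊆ _ from fun p hp => hp i hi) hE)
      fun _ _ _ _ => exp_pos _).smul (exp_pos _).le
  have hconv : ConvexOn ℝ E fun p => exp (M * G₁ (p i₀)) :=
    (hG₁.comp_linearMap (LinearMap.proj i₀ : (ι → ℝ) →ₗ[ℝ] ℝ)).subset (subset_univ _) hE
  convert (hconv.sub hconc).convex_le 0 using 1
  ext p
  simp only [mem_ofPred_eq, hrpow, smul_eq_mul, ← exp_sum, ← exp_add, Pi.sub_apply, sub_nonpos,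
    exp_le_exp, sum_neg_distrib, ← mul_sum]
  refine and_congr Iff.rfl ⟨fun h => ?_, fun h => ?_⟩ <;> nlinarith

theorem stmt16
    (d : ℕ) (hd : 2 ≤ d) (R M : ℝ) (hR : 0 < R)
    (G₁ : ℝ → ℝ) (hG₁ : ContDiff ℝ 2 G₁) (heven : ∀ p, G₁ (-p) = G₁ p)
    (hG₁0 : G₁ 0 = 0)
    (hpos : ∀ p : ℝ, 0 < p → 0 < G₁ p ∧ 0 < deriv G₁ p)
    (hM : M = -sInf ((fun p => deriv (deriv G₁) p / (deriv G₁ p) ^ 2) ''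
      Set.Ioi (0:ℝ)))
    (hMpos : 0 < M)
    (J : ℝ → ℝ)
    (hJ : ∀ p, J p = -(Real.log (1 - p) + p) / (M * ((d : ℝ) - 1)))
    (pR : ℝ) (hpR : pR ∈ Set.Ioo (0:ℝ) 1)
    (Gb : ℝ → ℝ)
    (hGb : ∀ p, Gb p = if |p| ≤ pR then J |p|
      else R + deriv J pR * (|p| - pR) +
        (1 / 2) * deriv (deriv J) pR * (|p| - pR) ^ 2) :
    ∀ r ≤ R,
      Convex ℝ {p : Fin d → ℝ |
        G₁ (p ⟨0, by omega⟩) +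
          ∑ i ∈ Finset.univ.erase (⟨0, by omega⟩ : Fin d), Gb (p i) ≤ r} := by
  intro r hr
  obtain ⟨hpR0, hpR1⟩ := hpR
  set s := Finset.univ.erase (⟨0, by omega⟩ : Fin d)
  have hs : (#s : ℝ) = d - 1 := by simp [s, Nat.cast_sub (by omega : 1 ≤ d)]
  have hsne : s.Nonempty := ⟨(⟨1, hd⟩ : Fin d), by simp [s]⟩
  have hc : 0 < M * ((d : ℝ) - 1) := by
    have : (2 : ℝ) ≤ d := by exact_mod_cast hd
    exact mul_pos hMpos (by linarith)
  have hJ' := deriv_J_pos hJ hc hpR0 hpR1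
  have hJ'' := deriv_deriv_J_nonneg hJ hc.le hpR1
  rw [setOf_add_sum_le_eq s _ hr (nonneg_of_even heven hG₁0 fun x hx => (hpos x hx).1.le)
    (Gb_nonneg hGb (fun t _ ht => J_nonneg hJ hc.le (by linarith)) hR.le hJ'.le hJ'')
    fun x hx => abs_le.1 (abs_le_of_Gb_le hGb hJ' hJ'' hx)]
  refine convex_setOf_add_sum_le hsne _ hMpos (convex_Icc _ _) ?_ ?_ r
  · exact convexOn_exp_mul_of_deriv2_add_mul_sq_nonneg hG₁ hMpos.le <|
      deriv2_add_mul_sq_deriv_nonneg hG₁ heven (fun x hx => (hpos x hx).2.ne') fun x hx =>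
        neg_le_of_eq_neg_sInf_image hM hMpos.ne' hx
  · rw [hs]
    refine (concaveOn_one_sub_abs_mul_exp_abs.subset (subset_univ _) (convex_Icc _ _)).congr
      fun x hx => ?_
    have hx' := abs_le.2 hx
    rw [hGb, if_pos hx', exp_neg_mul_J hJ hc.ne' (by linarith)]
end
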